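/- arXiv:2310.08461 — 2 statements merged into one kernel-verified Lean document; each statement's English description precedes it below -/
import Mathlib

section
/- With Ω, T, p, q as above, for every input x, every 1 ≤ t ≤ T, every 1 ≤ k ≤ t, and every function δ : Ω^t → [−1/2, 1/2] (extended by δ(y) = 0 for sequences y of length ≠ t): E_{y∼M(x, ∅, Q^{k−1} P^{t−k+1})}[δ(y)] ≤ E_{y∼M(x, ∅, Q^k P^{t−k})}[δ(y)] + E_k(x), i.e., replacing the first P by Q in the mixing pattern changes the expectation of δ by at most E_k(x), where E_k(x) = E_{y∼q_{≤T}(·|x)}[ 1{k ≤ |y|} · D_TVD(p(·|x,y_{<k}), q(·|x,y_{<k})) ]. -/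
open Finset

/-- Total variation distance between two distributions on a finite set. -/
noncomputable def tvd {Ω : Type*} [Fintype Ω] (P Q : Ω → ℝ) : ℝ :=
  (1 / 2) * ∑ c, |P c - Q c|

/-- `IsDist P`: `P` is a probability distribution on the finite set `Ω`. -/
def IsDist {Ω : Type*} [Fintype Ω] (P : Ω → ℝ) : Prop :=
  (∀ c, 0 ≤ P c) ∧ ∑ c, P c = 1

/-- A next-token model: for every input `x` and every prefix, a next-token distribution. -/
def IsModel {Ω ι : Type*} [Fintype Ω] (p : ι → List Ω → Ω → ℝ) : Prop :=
  ∀ x pre, IsDist (p x pre)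

/-- `Stopped eos T y`: `y` is a completed output sequence for horizon `T`: it is nonempty,
has length at most `T`, contains the end-of-sequence token at no position except possibly
the last one, and either ends with `eos` or has length exactly `T`. -/
def Stopped {Ω : Type*} [DecidableEq Ω] (eos : Ω) (T : ℕ) (y : List Ω) : Prop :=
  y ≠ [] ∧ y.length ≤ T ∧ eos ∉ y.dropLast ∧ (y.getLast? = some eos ∨ y.length = T)

open Classical in
/-- Probability that autoregressive sampling — where the next-token distribution used to
sample the `(t+1)`-st token given the length-`t` prefix `pre` is `ms t pre`, with horizon `T`
and end-of-sequence token `eos` — outputs exactly the sequence `y`. -/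
noncomputable def seqProb {Ω : Type*} [Fintype Ω] [DecidableEq Ω] (eos : Ω)
    (ms : ℕ → List Ω → Ω → ℝ) (T : ℕ) (y : List Ω) : ℝ :=
  if Stopped eos T y then ∏ t ∈ Finset.range y.length, ms t (y.take t) (y.getD t eos) else 0

/-- Expectation of `f` under the induced distribution over output sequences. -/
noncomputable def seqExp {Ω : Type*} [Fintype Ω] [DecidableEq Ω] (eos : Ω)
    (ms : ℕ → List Ω → Ω → ℝ) (T : ℕ) (f : List Ω → ℝ) : ℝ :=
  ∑ n ∈ Finset.Icc 1 T, ∑ v : Fin n → Ω, seqProb eos ms T (List.ofFn v) * f (List.ofFn v)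

/-- Expectation under `p_{≤T}(·|x)`, the output-sequence distribution of the
autoregressive model with next-token distributions `p`. -/
noncomputable def modelExp {Ω ι : Type*} [Fintype Ω] [DecidableEq Ω] (eos : Ω)
    (p : ι → List Ω → Ω → ℝ) (x : ι) (T : ℕ) (f : List Ω → ℝ) : ℝ :=
  seqExp eos (fun _ pre => p x pre) T f

/-- Expectation under the mixed-model sequence distribution `M(x, ∅, z)`, where the letter
`z_t` (`true` = letter `P`, i.e. target model `p`; `false` = letter `Q`, i.e. draft model `q`)
selects the model used to sample the `t`-th token, with horizon `|z|` and empty prefix. -/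
noncomputable def mixExp {Ω ι : Type*} [Fintype Ω] [DecidableEq Ω] (eos : Ω)
    (p q : ι → List Ω → Ω → ℝ) (x : ι) (z : List Bool) (f : List Ω → ℝ) : ℝ :=
  seqExp eos (fun t pre => if z.getD t true then p x pre else q x pre) z.length f

/-- `Σ_{t=1}^{|y|} D_TVD(p(·|x, y_{<t}), q(·|x, y_{<t}))`. -/
noncomputable def totalLoss {Ω ι : Type*} [Fintype Ω] (p q : ι → List Ω → Ω → ℝ)
    (x : ι) (y : List Ω) : ℝ :=
  ∑ t ∈ Finset.range y.length, tvd (p x (y.take t)) (q x (y.take t))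

/-- `1{t ≤ |y|} · D_TVD(p(·|x, y_{<t}), q(·|x, y_{<t}))` for a (1-indexed) position `t`. -/
noncomputable def stepLoss {Ω ι : Type*} [Fintype Ω] (p q : ι → List Ω → Ω → ℝ)
    (x : ι) (t : ℕ) (y : List Ω) : ℝ :=
  if t ≤ y.length then tvd (p x (y.take (t - 1))) (q x (y.take (t - 1))) else 0

/-- Expected output length `L_p(x) = E_{y∼p_{≤T}(·|x)}[|y|]` of the target model. -/
noncomputable def Lp {Ω ι : Type*} [Fintype Ω] [DecidableEq Ω] (eos : Ω)
    (p : ι → List Ω → Ω → ℝ) (x : ι) (T : ℕ) : ℝ :=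
  modelExp eos p x T (fun y => (y.length : ℝ))

/-- Sequence-level acceptance rate
`α(x) = 1 − E_{y∼p_{≤T}(·|x)}[Σ_{t=1}^{|y|} D_TVD(p(·|x,y_{<t}), q(·|x,y_{<t}))] / L_p(x)`. -/
noncomputable def acceptRate {Ω ι : Type*} [Fintype Ω] [DecidableEq Ω] (eos : Ω)
    (p q : ι → List Ω → Ω → ℝ) (x : ι) (T : ℕ) : ℝ :=
  1 - modelExp eos p x T (totalLoss p q x) / Lp eos p x T

/-- On-policy distillation loss
`ε(x) = E_{y∼q_{≤T}(·|x)}[(1/|y|) Σ_{t=1}^{|y|} D_TVD(p(·|x,y_{<t}), q(·|x,y_{<t}))]`. -/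
noncomputable def onPolicyLoss {Ω ι : Type*} [Fintype Ω] [DecidableEq Ω] (eos : Ω)
    (p q : ι → List Ω → Ω → ℝ) (x : ι) (T : ℕ) : ℝ :=
  modelExp eos q x T (fun y => (1 / (y.length : ℝ)) * totalLoss p q x y)

/-- `A_t(x) = E_{y∼p_{≤T}(·|x)}[1{t ≤ |y|} · D_TVD(p(·|x,y_{<t}), q(·|x,y_{<t}))]`. -/
noncomputable def Aterm {Ω ι : Type*} [Fintype Ω] [DecidableEq Ω] (eos : Ω)
    (p q : ι → List Ω → Ω → ℝ) (x : ι) (T t : ℕ) : ℝ :=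
  modelExp eos p x T (stepLoss p q x t)

/-- `E_t(x) = E_{y∼q_{≤T}(·|x)}[1{t ≤ |y|} · D_TVD(p(·|x,y_{<t}), q(·|x,y_{<t}))]`. -/
noncomputable def Eterm {Ω ι : Type*} [Fintype Ω] [DecidableEq Ω] (eos : Ω)
    (p q : ι → List Ω → Ω → ℝ) (x : ι) (T t : ℕ) : ℝ :=
  modelExp eos q x T (stepLoss p q x t)

set_option linter.unusedSectionVars false
namespace DSpec

variable {Ω : Type*} [Fintype Ω] [DecidableEq Ω]

/-- product of transition probabilities for extending prefix `s` by the tokens of `w`. -/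
noncomputable def wt (eos : Ω) (m : List Ω → Ω → ℝ) (s w : List Ω) : ℝ :=
  ∏ i ∈ Finset.range w.length, m (s ++ w.take i) (w.getD i eos)

@[simp] lemma wt_nil (eos : Ω) (m : List Ω → Ω → ℝ) (s : List Ω) : wt eos m s [] = 1 := by
  simp [wt]

lemma wt_cons (eos : Ω) (m : List Ω → Ω → ℝ) (s : List Ω) (c : Ω) (l : List Ω) :
    wt eos m s (c :: l) = m s c * wt eos m (s ++ [c]) l := by
  unfold wt
  rw [List.length_cons, Finset.prod_range_succ']
  simp only [List.take_succ_cons, List.getD_cons_succ, List.take_zero, List.append_nil,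
    List.getD_cons_zero]
  rw [mul_comm]
  congr 1
  apply Finset.prod_congr rfl
  intro i _
  congr 1
  simp

lemma wt_nonneg {m : List Ω → Ω → ℝ} (hm : ∀ s c, 0 ≤ m s c) (eos : Ω) (s w : List Ω) :
    0 ≤ wt eos m s w :=
  Finset.prod_nonneg fun _ _ => hm _ _

lemma wt_append (eos : Ω) (m : List Ω → Ω → ℝ) (s u z : List Ω) :
    wt eos m s (u ++ z) = wt eos m s u * wt eos m (s ++ u) z := by
  induction u generalizing s with
  | nil => simp
  | cons c u ih =>
    rw [List.cons_append, wt_cons, wt_cons, ih, mul_assoc]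
    congr 2
    simp

/-- Sum of `g` over all lists of length `n`. -/
noncomputable def sumLen (n : ℕ) (g : List Ω → ℝ) : ℝ := ∑ v : Fin n → Ω, g (List.ofFn v)

lemma sumLen_zero (g : List Ω → ℝ) : sumLen 0 g = g [] := by
  simp [sumLen]

lemma sumLen_succ (n : ℕ) (g : List Ω → ℝ) :
    sumLen (n + 1) g = ∑ c : Ω, sumLen n (fun l => g (c :: l)) := by
  rw [sumLen, ← (Fin.consEquiv (fun _ : Fin (n+1) => Ω)).sum_comp]
  rw [Fintype.sum_prod_type]
  apply Finset.sum_congr rfl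
  intro c _
  apply Finset.sum_congr rfl
  intro v _
  simp [Fin.consEquiv, List.ofFn_succ]

lemma sumLen_congr {n : ℕ} {g h : List Ω → ℝ} (H : ∀ l : List Ω, l.length = n → g l = h l) :
    sumLen n g = sumLen n h := by
  apply Finset.sum_congr rfl
  intro v _
  exact H _ (by simp)

lemma sumLen_add (a b : ℕ) (g : List Ω → ℝ) :
    sumLen (a + b) g = sumLen a (fun u => sumLen b (fun w => g (u ++ w))) := by
  induction a generalizing g with
  | zero => simp [sumLen_zero]
  | succ a ih =>
    have h : a + 1 + b = (a + b) + 1 := by omega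
    rw [h, sumLen_succ, sumLen_succ]
    apply Finset.sum_congr rfl
    intro c _
    rw [ih]
    apply Finset.sum_congr rfl
    intro v _
    apply Finset.sum_congr rfl
    intro w _
    simp

lemma sumLen_nonneg {n : ℕ} {g : List Ω → ℝ} (h : ∀ l : List Ω, l.length = n → 0 ≤ g l) :
    0 ≤ sumLen n g :=
  Finset.sum_nonneg fun v _ => h _ (by simp)

lemma sumLen_mono {n : ℕ} {g h : List Ω → ℝ} (H : ∀ l : List Ω, l.length = n → g l ≤ h l) :
    sumLen n g ≤ sumLen n h :=
  Finset.sum_le_sum fun v _ => H _ (by simp)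

lemma sumLen_sub (n : ℕ) (g h : List Ω → ℝ) :
    sumLen n (fun l => g l - h l) = sumLen n g - sumLen n h :=
  Finset.sum_sub_distrib _ _

lemma sumLen_mul_left (n : ℕ) (r : ℝ) (g : List Ω → ℝ) :
    sumLen n (fun l => r * g l) = r * sumLen n g :=
  (Finset.mul_sum _ _ _).symm

lemma sumLen_wt {m : List Ω → Ω → ℝ} (hm : ∀ s, IsDist (m s)) (eos : Ω) (n : ℕ) (s : List Ω) :
    sumLen n (wt eos m s) = 1 := by
  induction n generalizing s with
  | zero => simp [sumLen_zero]
  | succ n ih =>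
    rw [sumLen_succ]
    have : ∀ c : Ω, sumLen n (fun l => wt eos m s (c :: l)) = m s c := by
      intro c
      have : sumLen n (fun l => wt eos m s (c :: l))
          = sumLen n (fun l => m s c * wt eos m (s ++ [c]) l) := by
        apply sumLen_congr; intro l _; rw [wt_cons]
      rw [this, sumLen_mul_left, ih, mul_one]
    simp only [this]
    exact (hm s).2

noncomputable def sprod (eos : Ω) (ms : ℕ → List Ω → Ω → ℝ) (y : List Ω) : ℝ :=
  ∏ i ∈ Finset.range y.length, ms i (y.take i) (y.getD i eos)

open Classical in
lemma seqProb_eq (eos : Ω) (ms : ℕ → List Ω → Ω → ℝ) (T : ℕ) (y : List Ω) :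
    seqProb eos ms T y = if Stopped eos T y then sprod eos ms y else 0 := by
  unfold seqProb sprod
  split_ifs with h1 h2 h3 <;> first | rfl | (exfalso ; tauto)

lemma sprod_split' (eos : Ω) (ms : ℕ → List Ω → Ω → ℝ) (A B : List Ω → Ω → ℝ) (u z : List Ω)
    (hA : ∀ i < u.length, ms i = A) (hB : ∀ i, u.length ≤ i → ms i = B) :
    sprod eos ms (u ++ z) = wt eos A [] u * wt eos B u z := by
  unfold sprod wt
  rw [List.length_append, Finset.prod_range_add]
  congr 1
  · apply Finset.prod_congr rfl
    intro i hi
    rw [Finset.mem_range] at hi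
    rw [hA i hi, List.take_append_of_le_length (le_of_lt hi),
      List.getD_append _ _ _ _ hi, List.nil_append]
  · apply Finset.prod_congr rfl
    intro i _
    rw [hB _ (Nat.le_add_right _ _), List.take_add, List.take_left, List.drop_left,
      List.getD_append_right _ _ _ _ (Nat.le_add_right _ _), Nat.add_sub_cancel_left]
lemma getLast?_cons_ne (c : Ω) (l : List Ω) (h : l ≠ []) :
    (c :: l).getLast? = l.getLast? := List.getLast?_append_of_ne_nil [c] h

lemma stopped_full (eos : Ω) (t : ℕ) (ht : 1 ≤ t) (y : List Ω) (hy : y.length = t) :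
    Stopped eos t y ↔ eos ∉ y.dropLast := by
  unfold Stopped
  have hne : y ≠ [] := by
    intro h; rw [h] at hy; simp at hy; omega
  constructor
  · tauto
  · intro h; exact ⟨hne, by omega, h, Or.inr hy⟩

lemma stopped_append (eos : Ω) (T : ℕ) (u z : List Ω) (hz : z ≠ [])
    (hlen : u.length + z.length ≤ T) :
    Stopped eos T (u ++ z) ↔
      (eos ∉ u ∧ (eos ∉ z.dropLast ∧ (z.getLast? = some eos ∨ u.length + z.length = T))) := by
  unfold Stopped
  rw [List.dropLast_append_of_ne_nil hz, List.getLast?_append_of_ne_nil _ hz]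
  have h1 : u ++ z ≠ [] := by simp [hz]
  have h2 : (u ++ z).length = u.length + z.length := List.length_append
  rw [h2]
  simp only [List.mem_append]
  constructor
  · rintro ⟨-, -, h3, h4⟩; tauto
  · rintro ⟨ha, hb, hc⟩; exact ⟨h1, hlen, by tauto, hc⟩

open Classical in
/-- Mass of stopped completions of a prefix, within `R` further tokens. -/
noncomputable def CMg (eos : Ω) (m : List Ω → Ω → ℝ) (s : List Ω) (R : ℕ) : ℝ :=
  ∑ j ∈ Finset.range R, sumLen (j+1) (fun z =>
    if eos ∉ z.dropLast ∧ (z.getLast? = some eos ∨ j + 1 = R) then wt eos m s z else 0)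

lemma sumLen_zero_fun (n : ℕ) : sumLen n (fun _ : List Ω => (0:ℝ)) = 0 := Finset.sum_const_zero

open Classical in
lemma CMg_eq_one {m : List Ω → Ω → ℝ} (hm : ∀ s, IsDist (m s)) (eos : Ω) :
    ∀ R, 1 ≤ R → ∀ s, CMg eos m s R = 1 := by
  intro R
  induction R with
  | zero => omega
  | succ R ih =>
    intro _ s
    rcases Nat.eq_zero_or_pos R with hR | hR
    · subst hR
      unfold CMg
      rw [Finset.sum_range_one, sumLen_succ]
      refine Eq.trans (Finset.sum_congr rfl fun c _ => ?_) (hm s).2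
      rw [sumLen_zero]
      split_ifs with h
      · rw [wt_cons]; simp
      · exact absurd ⟨by simp, by simp⟩ h
    · -- R ≥ 1
      unfold CMg
      rw [Finset.sum_range_succ']
      -- first-step term (j = 0)
      have h0 : (sumLen (0+1) fun z =>
          if eos ∉ z.dropLast ∧ (z.getLast? = some eos ∨ 0 + 1 = R + 1)
          then wt eos m s z else 0) = m s eos := by
        rw [sumLen_succ]
        have hR1 : ¬ (0 + 1 = R + 1) := by omega
        simp only [sumLen_zero]
        have : ∀ c : Ω, (if eos ∉ ([c] : List Ω).dropLast ∧
            (([c] : List Ω).getLast? = some eos ∨ 0 + 1 = R + 1)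
            then wt eos m s [c] else 0) = if c = eos then m s c else 0 := by
          intro c
          by_cases hc : c = eos <;> simp [hc, hR1, wt_cons, hR.ne']
        rw [Finset.sum_congr rfl (fun c _ => this c), Finset.sum_ite_eq' Finset.univ eos (m s)]
        simp
      rw [h0]
      -- remaining terms
      have hmain : ∀ j ∈ Finset.range R, (sumLen (j+1+1) fun z =>
          if eos ∉ z.dropLast ∧ (z.getLast? = some eos ∨ j + 1 + 1 = R + 1)
          then wt eos m s z else 0)
          = ∑ c : Ω, (if c = eos then 0 else m s c * sumLen (j+1) (fun l =>
              if eos ∉ l.dropLast ∧ (l.getLast? = some eos ∨ j + 1 = R)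
              then wt eos m (s ++ [c]) l else 0)) := by
        intro j _
        rw [sumLen_succ]
        apply Finset.sum_congr rfl
        intro c _
        by_cases hc : c = eos
        · rw [if_pos hc]
          have : ∀ l : List Ω, l.length = j + 1 → (if eos ∉ (c :: l).dropLast ∧
              ((c :: l).getLast? = some eos ∨ j + 1 + 1 = R + 1)
              then wt eos m s (c :: l) else 0) = 0 := by
            intro l hl
            have hlne : l ≠ [] := by intro h; rw [h] at hl; simp at hl
            rw [if_neg]
            rw [List.dropLast_cons_of_ne_nil hlne]
            intro ⟨h1, _⟩
            exact h1 (by simp [hc])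
          rw [sumLen_congr this, sumLen_zero_fun]
        · rw [if_neg hc, ← sumLen_mul_left]
          apply sumLen_congr
          intro l hl
          have hlne : l ≠ [] := by intro h; rw [h] at hl; simp at hl
          rw [List.dropLast_cons_of_ne_nil hlne, getLast?_cons_ne c l hlne, wt_cons]
          have hiff : (eos ∉ c :: l.dropLast ∧ (l.getLast? = some eos ∨ j + 1 + 1 = R + 1))
              ↔ (eos ∉ l.dropLast ∧ (l.getLast? = some eos ∨ j + 1 = R)) := by
            simp only [List.mem_cons]
            constructor
            · rintro ⟨h1, h2⟩
              refine ⟨fun h => h1 (Or.inr h), ?_⟩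
              rcases h2 with h2 | h2
              · exact Or.inl h2
              · exact Or.inr (by omega)
            · rintro ⟨h1, h2⟩
              refine ⟨?_, ?_⟩
              · rintro (h | h)
                · exact hc h.symm
                · exact h1 h
              · rcases h2 with h2 | h2
                · exact Or.inl h2
                · exact Or.inr (by omega)
          rw [if_congr hiff rfl rfl]
          split_ifs <;> simp
      rw [Finset.sum_congr rfl hmain, Finset.sum_comm]
      have hc2 : ∀ c : Ω, (∑ j ∈ Finset.range R, if c = eos then 0 else
          m s c * sumLen (j+1) (fun l =>
            if eos ∉ l.dropLast ∧ (l.getLast? = some eos ∨ j + 1 = R)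
            then wt eos m (s ++ [c]) l else 0))
          = if c = eos then 0 else m s c := by
        intro c
        by_cases hc : c = eos
        · simp [hc]
        · simp only [if_neg hc]
          rw [← Finset.mul_sum]
          have : CMg eos m (s ++ [c]) R = 1 := ih hR (s ++ [c])
          unfold CMg at this
          rw [this, mul_one]
      rw [Finset.sum_congr rfl (fun c _ => hc2 c)]
      have : ∀ c : Ω, (if c = eos then 0 else m s c) + (if c = eos then m s c else 0)
          = m s c := by intro c; split_ifs <;> simp
      calc (∑ c : Ω, if c = eos then 0 else m s c) + m s eos
          = ∑ c : Ω, ((if c = eos then 0 else m s c) + (if c = eos then m s c else 0)) := by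
            rw [Finset.sum_add_distrib, Finset.sum_ite_eq' Finset.univ eos (m s)]
            simp
        _ = ∑ c : Ω, m s c := Finset.sum_congr rfl (fun c _ => this c)
        _ = 1 := (hm s).2
lemma sum_sumLen_comm {γ : Type*} (s : Finset γ) (h : γ → List Ω → ℝ) (a : ℕ) :
    ∑ j ∈ s, sumLen a (h j) = sumLen a (fun u => ∑ j ∈ s, h j u) :=
  Finset.sum_comm

lemma tvd_nonneg (P Q : Ω → ℝ) : 0 ≤ tvd P Q := by
  unfold tvd
  positivity

open Classical in
lemma Eterm_eq {ι : Type*} (eos : Ω) (T : ℕ) (p q : ι → List Ω → Ω → ℝ) (hq : IsModel q)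
    (x : ι) (a : ℕ) (ha : a < T) :
    Eterm eos p q x T (a+1) =
      sumLen a (fun u => if eos ∉ u then wt eos (q x) [] u * tvd (p x u) (q x u) else 0) := by
  have hqd : ∀ s, IsDist (q x s) := fun s => hq x s
  have e0 : Eterm eos p q x T (a+1) = ∑ n ∈ Finset.Icc 1 T, sumLen n
      (fun y => seqProb eos (fun _ pre => q x pre) T y * stepLoss p q x (a+1) y) := rfl
  rw [e0]
  have hsub : Finset.Icc (a+1) T ⊆ Finset.Icc 1 T :=
    Finset.Icc_subset_Icc (by omega) (le_refl T)
  have hvan : ∀ n ∈ Finset.Icc 1 T, n ∉ Finset.Icc (a+1) T → sumLen n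
      (fun y => seqProb eos (fun _ pre => q x pre) T y * stepLoss p q x (a+1) y) = 0 := by
    intro n hn hn2
    have hlt : n < a + 1 := by
      simp only [Finset.mem_Icc] at hn hn2; omega
    rw [sumLen_congr (h := fun _ => (0:ℝ)), sumLen_zero_fun]
    intro y hy
    have : stepLoss p q x (a+1) y = 0 := by
      unfold stepLoss
      rw [if_neg]; omega
    rw [this, mul_zero]
  rw [← Finset.sum_subset hsub hvan]
  rw [← Finset.Ico_add_one_right_eq_Icc, Finset.sum_Ico_eq_sum_range]
  have hTa : T + 1 - (a + 1) = T - a := by omega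
  rw [hTa]
  -- per-j rewriting
  have hper : ∀ j ∈ Finset.range (T - a), sumLen (a + 1 + j)
      (fun y => seqProb eos (fun _ pre => q x pre) T y * stepLoss p q x (a+1) y)
      = sumLen a (fun u => sumLen (j+1) (fun z =>
          (if eos ∉ u then wt eos (q x) [] u * tvd (p x u) (q x u) else 0) *
          (if eos ∉ z.dropLast ∧ (z.getLast? = some eos ∨ j + 1 = T - a)
            then wt eos (q x) u z else 0))) := by
    intro j hj
    have hjT : a + 1 + j ≤ T := by
      rw [Finset.mem_range] at hj; omega
    have hidx : a + 1 + j = a + (j + 1) := by omega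
    rw [hidx, sumLen_add]
    apply sumLen_congr
    intro u hu
    apply sumLen_congr
    intro z hz
    have hzne : z ≠ [] := by intro h; rw [h] at hz; simp at hz
    have hlen : u.length + z.length ≤ T := by omega
    rw [seqProb_eq]
    have hsp : sprod eos (fun _ pre => q x pre) (u ++ z)
        = wt eos (q x) [] u * wt eos (q x) u z :=
      sprod_split' eos _ (q x) (q x) u z (fun _ _ => rfl) (fun _ _ => rfl)
    have hstep : stepLoss p q x (a+1) (u ++ z) = tvd (p x u) (q x u) := by
      unfold stepLoss
      rw [if_pos (by rw [List.length_append]; omega)]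
      have h1 : a + 1 - 1 = u.length := by omega
      rw [h1, List.take_left]
    rw [hstep, stopped_append eos T u z hzne hlen, hsp]
    have heq : (u.length + z.length = T) ↔ (j + 1 = T - a) := by
      rw [hu, hz]; omega
    by_cases h1 : eos ∉ u
    · by_cases h2 : eos ∉ z.dropLast ∧ (z.getLast? = some eos ∨ j + 1 = T - a)
      · have hpos : eos ∉ u ∧ eos ∉ z.dropLast ∧
            (z.getLast? = some eos ∨ u.length + z.length = T) := by
          refine ⟨h1, h2.1, ?_⟩
          rcases h2.2 with h | h
          · exact Or.inl h
          · exact Or.inr (heq.mpr h)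
        rw [if_pos hpos, if_pos h1, if_pos h2]; ring
      · have hneg : ¬(eos ∉ u ∧ eos ∉ z.dropLast ∧
            (z.getLast? = some eos ∨ u.length + z.length = T)) := by
          rintro ⟨-, hb, hc⟩
          refine h2 ⟨hb, ?_⟩
          rcases hc with h | h
          · exact Or.inl h
          · exact Or.inr (heq.mp h)
        rw [if_neg hneg, if_pos h1, if_neg h2, mul_zero, zero_mul]
    · rw [if_neg (fun h => h1 h.1), if_neg h1]
      simp
  rw [Finset.sum_congr rfl hper, sum_sumLen_comm]
  apply sumLen_congr
  intro u hu
  by_cases h1 : eos ∉ u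
  · simp only [if_pos h1]
    have : ∀ j ∈ Finset.range (T - a), (sumLen (j+1) fun z =>
        wt eos (q x) [] u * tvd (p x u) (q x u) *
        (if eos ∉ z.dropLast ∧ (z.getLast? = some eos ∨ j + 1 = T - a)
          then wt eos (q x) u z else 0))
        = wt eos (q x) [] u * tvd (p x u) (q x u) * sumLen (j+1) (fun z =>
          if eos ∉ z.dropLast ∧ (z.getLast? = some eos ∨ j + 1 = T - a)
            then wt eos (q x) u z else 0) := by
      intro j _
      rw [← sumLen_mul_left]
    rw [Finset.sum_congr rfl this, ← Finset.mul_sum]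
    have hcm : CMg eos (q x) u (T - a) = 1 := CMg_eq_one hqd eos (T - a) (by omega) u
    unfold CMg at hcm
    rw [hcm, mul_one]
  · simp only [if_neg h1]
    rw [Finset.sum_congr rfl (fun j _ => ?_), Finset.sum_const_zero]
    rw [sumLen_congr (h := fun _ => (0:ℝ)) (fun l _ => by rw [zero_mul]), sumLen_zero_fun]
open Classical in
lemma seqExp_support (eos : Ω) (ms : ℕ → List Ω → Ω → ℝ) (T t : ℕ) (h1 : 1 ≤ t) (h2 : t ≤ T)
    (f : List Ω → ℝ) (hf : ∀ y : List Ω, y.length ≠ t → f y = 0) :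
    seqExp eos ms T f = sumLen t (fun y => seqProb eos ms T y * f y) := by
  have e0 : seqExp eos ms T f
      = ∑ n ∈ Finset.Icc 1 T, sumLen n (fun y => seqProb eos ms T y * f y) := rfl
  rw [e0]
  apply Finset.sum_eq_single_of_mem t (by rw [Finset.mem_Icc]; omega)
  intro n hn hne
  rw [sumLen_congr (h := fun _ => (0:ℝ)) (fun l hl => by
    rw [hf l (by omega), mul_zero]), sumLen_zero_fun]

open Classical in
lemma mix_diff_le {ι : Type*} (eos : Ω) (p q : ι → List Ω → Ω → ℝ)
    (hp : IsModel p) (hq : IsModel q)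
    (x : ι) (a b : ℕ) (ms1 ms2 : ℕ → List Ω → Ω → ℝ)
    (hA1 : ∀ i < a, ms1 i = q x) (hB1 : ∀ i, a ≤ i → ms1 i = p x)
    (hA2 : ∀ i < a + 1, ms2 i = q x) (hB2 : ∀ i, a + 1 ≤ i → ms2 i = p x)
    (δ : List Ω → ℝ) (hδ1 : ∀ y, δ y ∈ Set.Icc (-(1/2) : ℝ) (1/2)) :
    sumLen (a + (b+1)) (fun y => (if Stopped eos (a+(b+1)) y then sprod eos ms1 y else 0) * δ y)
    ≤ sumLen (a + (b+1)) (fun y => (if Stopped eos (a+(b+1)) y then sprod eos ms2 y else 0) * δ y)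
      + sumLen a (fun u => if eos ∉ u then wt eos (q x) [] u * tvd (p x u) (q x u) else 0) := by
  have hpn : ∀ s c, 0 ≤ p x s c := fun s c => (hp x s).1 c
  have hqn : ∀ s c, 0 ≤ q x s c := fun s c => (hq x s).1 c
  rw [← sub_le_iff_le_add', ← sumLen_sub, sumLen_add]
  apply sumLen_mono
  intro u hu
  rw [sumLen_succ]
  refine le_trans (Finset.sum_le_sum (g := fun c =>
    (if eos ∉ u then wt eos (q x) [] u * ((1/2) * |p x u c - q x u c|) else 0) *
      sumLen b (wt eos (p x) (u ++ [c]))) ?_) ?_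
  swap
  · -- final computation
    rw [Finset.sum_congr rfl (fun c _ => by
      rw [sumLen_wt (fun s => hp x s) eos b (u ++ [c]), mul_one])]
    by_cases h1 : eos ∉ u
    · simp only [if_pos h1]
      have htv : ∑ c : Ω, (1/2) * |p x u c - q x u c| = tvd (p x u) (q x u) := by
        unfold tvd; rw [Finset.mul_sum]
      rw [← Finset.mul_sum, htv]
    · simp only [if_neg h1]
      simp
  · -- per-(c,w) bound
    intro c _
    rw [← sumLen_mul_left]
    apply sumLen_mono
    intro w hw
    -- y = u ++ c :: w
    have hcw : (c :: w) ≠ [] := by simp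
    have hs1 : sprod eos ms1 (u ++ c :: w)
        = wt eos (q x) [] u * (p x u c * wt eos (p x) (u ++ [c]) w) := by
      rw [sprod_split' eos ms1 (q x) (p x) u (c :: w)
        (fun i hi => hA1 i (by omega)) (fun i hi => hB1 i (by omega)), wt_cons]
    have hs2 : sprod eos ms2 (u ++ c :: w)
        = wt eos (q x) [] u * (q x u c * wt eos (p x) (u ++ [c]) w) := by
      have he : u ++ c :: w = (u ++ [c]) ++ w := by simp
      rw [he, sprod_split' eos ms2 (q x) (p x) (u ++ [c]) w
        (fun i hi => hA2 i (by simp at hi; omega)) (fun i hi => hB2 i (by simp at hi; omega)),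
        wt_append]
      simp [wt_cons]
      ring
    rw [hs1, hs2]
    set W1 : ℝ := wt eos (q x) [] u with hW1
    set W2 : ℝ := wt eos (p x) (u ++ [c]) w with hW2
    have hW1n : 0 ≤ W1 := wt_nonneg hqn eos [] u
    have hW2n : 0 ≤ W2 := wt_nonneg hpn eos (u ++ [c]) w
    by_cases hst : Stopped eos (a+(b+1)) (u ++ c :: w)
    · -- stopped: bound via |δ| ≤ 1/2
      have hin : eos ∉ u := by
        have h3 := hst.2.2.1
        rw [List.dropLast_append_of_ne_nil hcw] at h3
        intro h; exact h3 (List.mem_append_left _ h)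
      rw [if_pos hst, if_pos hst, if_pos hin]
      have key : (p x u c - q x u c) * δ (u ++ c :: w) ≤ (1/2) * |p x u c - q x u c| := by
        calc (p x u c - q x u c) * δ (u ++ c :: w)
            ≤ |(p x u c - q x u c) * δ (u ++ c :: w)| := le_abs_self _
          _ = |p x u c - q x u c| * |δ (u ++ c :: w)| := abs_mul _ _
          _ ≤ |p x u c - q x u c| * (1/2) := by
              apply mul_le_mul_of_nonneg_left _ (abs_nonneg _)
              rcases hδ1 (u ++ c :: w) with ⟨hl, hr⟩
              exact abs_le.mpr ⟨by linarith, hr⟩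
          _ = (1/2) * |p x u c - q x u c| := by ring
      have := mul_le_mul_of_nonneg_left key (mul_nonneg hW1n hW2n)
      calc W1 * (p x u c * W2) * δ (u ++ c :: w) - W1 * (q x u c * W2) * δ (u ++ c :: w)
          = (W1 * W2) * ((p x u c - q x u c) * δ (u ++ c :: w)) := by ring
        _ ≤ (W1 * W2) * ((1/2) * |p x u c - q x u c|) := this
        _ = W1 * ((1/2) * |p x u c - q x u c|) * W2 := by ring
    · rw [if_neg hst, if_neg hst]
      simp only [zero_mul, sub_zero, sub_self]
      have habs : (0:ℝ) ≤ 1/2 * |p x u c - q x u c| :=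
        mul_nonneg (by norm_num) (abs_nonneg _)
      split_ifs with h
      · simp
      · exact mul_nonneg (mul_nonneg hW1n habs) hW2n
lemma patF (a b i : ℕ) (hi : i < a) :
    (List.replicate a false ++ List.replicate b true).getD i true = false := by
  rw [List.getD_append _ _ _ _ (by simp [hi])]
  simp [List.getD_eq_getElem?_getD, List.getElem?_replicate, hi]

lemma patT (a b i : ℕ) (hi : a ≤ i) :
    (List.replicate a false ++ List.replicate b true).getD i true = true := by
  rw [List.getD_append_right _ _ _ _ (by simp [hi])]
  rcases Nat.lt_or_ge (i - (List.replicate a false).length) b with h | h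
  · simp only [List.length_replicate] at h
    simp [List.getD_eq_getElem?_getD, List.getElem?_replicate, h]
  · rw [List.getD_eq_default]
    simpa using h

end DSpec

/-- **DistillSpec, one-step replacement.** For `1 ≤ k ≤ t ≤ T` and any
`δ : Ω^t → [−1/2,1/2]` (extended by `0` to sequences of length `≠ t`),
`E_{y∼M(x,∅,Q^{k−1}P^{t−k+1})}[δ(y)] ≤ E_{y∼M(x,∅,Q^k P^{t−k})}[δ(y)] + E_k(x)`. -/
theorem mixExp_replace_first_P
    {Ω ι : Type*} [Fintype Ω] [DecidableEq Ω] (eos : Ω)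
    (T : ℕ) (hT : 1 ≤ T)
    (p q : ι → List Ω → Ω → ℝ) (hp : IsModel p) (hq : IsModel q)
    (x : ι) (t k : ℕ) (ht1 : 1 ≤ t) (ht2 : t ≤ T) (hk1 : 1 ≤ k) (hk2 : k ≤ t)
    (δ : List Ω → ℝ)
    (hδ1 : ∀ y, δ y ∈ Set.Icc (-(1 / 2) : ℝ) (1 / 2))
    (hδ2 : ∀ y : List Ω, y.length ≠ t → δ y = 0) :
    mixExp eos p q x (List.replicate (k - 1) false ++ List.replicate (t - k + 1) true) δ ≤
      mixExp eos p q x (List.replicate k false ++ List.replicate (t - k) true) δ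
        + Eterm eos p q x T k := by
    classical
  obtain ⟨a, rfl⟩ : ∃ a, k = a + 1 := ⟨k - 1, by omega⟩
  obtain ⟨b, rfl⟩ : ∃ b, t = a + 1 + b := ⟨t - (a + 1), by omega⟩
  have h1 : a + 1 - 1 = a := by omega
  have h2 : a + 1 + b - (a + 1) + 1 = b + 1 := by omega
  have h3 : a + 1 + b - (a + 1) = b := by omega
  rw [h1, h2, h3]
  set z1 := List.replicate a false ++ List.replicate (b + 1) true with hz1
  set z2 := List.replicate (a + 1) false ++ List.replicate b true with hz2
  have hlen1 : z1.length = a + (b + 1) := by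
    rw [hz1, List.length_append, List.length_replicate, List.length_replicate]
  have hlen2 : z2.length = a + (b + 1) := by
    rw [hz2, List.length_append, List.length_replicate, List.length_replicate]
    omega
  have ht1' : 1 ≤ a + (b + 1) := by omega
  have hδ2' : ∀ y : List Ω, y.length ≠ a + (b + 1) → δ y = 0 :=
    fun y hy => hδ2 y (by omega)
  have e1 : mixExp eos p q x z1 δ
      = DSpec.sumLen (a + (b + 1)) (fun y =>
          (if Stopped eos (a + (b + 1)) y then
            DSpec.sprod eos (fun i pre => if z1.getD i true then p x pre else q x pre) y
          else 0) * δ y) := by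
    show seqExp eos (fun i pre => if z1.getD i true then p x pre else q x pre) z1.length δ = _
    rw [hlen1, DSpec.seqExp_support eos _ (a + (b + 1)) (a + (b + 1)) ht1' le_rfl δ hδ2']
    apply DSpec.sumLen_congr
    intro y _
    rw [DSpec.seqProb_eq]
  have e2 : mixExp eos p q x z2 δ
      = DSpec.sumLen (a + (b + 1)) (fun y =>
          (if Stopped eos (a + (b + 1)) y then
            DSpec.sprod eos (fun i pre => if z2.getD i true then p x pre else q x pre) y
          else 0) * δ y) := by
    show seqExp eos (fun i pre => if z2.getD i true then p x pre else q x pre) z2.length δ = _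
    rw [hlen2, DSpec.seqExp_support eos _ (a + (b + 1)) (a + (b + 1)) ht1' le_rfl δ hδ2']
    apply DSpec.sumLen_congr
    intro y _
    rw [DSpec.seqProb_eq]
  rw [e1, e2, DSpec.Eterm_eq eos T p q hq x a (by omega)]
  apply DSpec.mix_diff_le eos p q hp hq x a b _ _ _ _ _ _ δ hδ1
  · intro i hi
    funext pre
    rw [hz1, DSpec.patF a (b + 1) i hi]
    rfl
  · intro i hi
    funext pre
    rw [hz1, DSpec.patT a (b + 1) i hi]
    rfl
  · intro i hi
    funext pre
    rw [hz2, DSpec.patF (a + 1) b i hi]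
    rfl
  · intro i hi
    funext pre
    rw [hz2, DSpec.patT (a + 1) b i hi]
    rfl
end

section
/- With Ω, T, p, q as above, for every input x, every 1 ≤ t ≤ T, and every function δ : Ω^t → [−1/2, 1/2] (extended by δ(y) = 0 for sequences y of length ≠ t): E_{y∼M(x, ∅, P^t)}[δ(y)] ≤ E_{y∼M(x, ∅, Q^t)}[δ(y)] + Σ_{k=1}^{t} E_k(x), where E_k(x) = E_{y∼q_{≤T}(·|x)}[ 1{k ≤ |y|} · D_TVD(p(·|x,y_{<k}), q(·|x,y_{<k})) ]. -/
open Finset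

/-! Interpolate between the two processes by the hybrids that sample the first `k` tokens from
the draft model `q` and the rest from the target model `p`. Consecutive hybrids differ only in the
distribution of token `k + 1`: given a prefix `u` of `k` tokens, the difference of expectations is
`Σ_c (p(c|u) - q(c|u)) V(u c)`, where `V(u c) ∈ [-1/2, 1/2]` is the expectation of `δ` when the
remaining tokens are drawn from `p`; hence it is at most `D_TVD(p(·|u), q(·|u))`. Averaging
over `u`, which both hybrids draw from `q`, gives `E_{k+1}(x)`, and the hybrids telescope. -/

section Sums
variable {Ω : Type*} [Fintype Ω]

lemma sum_sub_mul_le_tvd {P Q V : Ω → ℝ} (hV : ∀ c, |V c| ≤ 1 / 2) :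
    ∑ c, (P c - Q c) * V c ≤ tvd P Q := by
  rw [tvd, mul_sum]
  refine sum_le_sum fun c _ => ?_
  calc (P c - Q c) * V c ≤ |P c - Q c| * |V c| := by rw [← abs_mul]; exact le_abs_self _
    _ ≤ |P c - Q c| * (1 / 2) := by gcongr; exact hV c
    _ = 1 / 2 * |P c - Q c| := mul_comm _ _

lemma sum_Icc_one_eq_sum_range {M : Type*} [AddCommMonoid M] (t : ℕ) (f : ℕ → M) :
    ∑ n ∈ Icc 1 t, f n = ∑ k ∈ range t, f (k + 1) := by
  rw [range_eq_Ico, sum_Ico_add' f 0 t 1]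
  rfl

lemma sum_ofFn_Icc_succ {M : Type*} [AddCommMonoid M] (H : ℕ) (F : List Ω → M) :
    ∑ n ∈ Icc 1 (H + 1), ∑ v : Fin n → Ω, F (List.ofFn v)
      = ∑ c, (F [c] + ∑ n ∈ Icc 1 H, ∑ w : Fin n → Ω, F (c :: List.ofFn w)) := by
  have h_Icc : ∀ f : ℕ → M, ∑ n ∈ Icc 1 (H + 1), f n = f 1 + ∑ n ∈ Icc 1 H, f (n + 1) := by
    intro f
    rw [sum_Icc_one_eq_sum_range, sum_Icc_one_eq_sum_range, sum_range_succ', add_comm]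
  have h_cons : ∀ n, ∑ v : Fin (n + 1) → Ω, F (List.ofFn v)
      = ∑ c, ∑ w : Fin n → Ω, F (c :: List.ofFn w) := by
    intro n
    rw [← (Fin.consEquiv fun _ => Ω).sum_comp, Fintype.sum_prod_type]
    simp
  rw [h_Icc, sum_add_distrib, sum_comm (s := univ), h_cons]
  simp only [h_cons]
  simp

end Sums

section Families
variable {Ω : Type*} [Fintype Ω]

def tailFamily (ms : ℕ → List Ω → Ω → ℝ) (c : Ω) : ℕ → List Ω → Ω → ℝ :=
  fun j pre => ms (j + 1) (c :: pre)

lemma IsModel.tailFamily {ms : ℕ → List Ω → Ω → ℝ} (hms : IsModel ms) (c : Ω) :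
    IsModel (tailFamily ms c) :=
  fun j pre => hms (j + 1) (c :: pre)

noncomputable def tvdAt (ms ms' : ℕ → List Ω → Ω → ℝ) (k : ℕ) (y : List Ω) : ℝ :=
  if k < y.length then tvd (ms k (y.take k)) (ms' k (y.take k)) else 0

lemma tvdAt_succ_cons (ms ms' : ℕ → List Ω → Ω → ℝ) (k : ℕ) (c : Ω) :
    (fun y => tvdAt ms ms' (k + 1) (c :: y)) = tvdAt (tailFamily ms c) (tailFamily ms' c) k := by
  ext y; simp [tvdAt, tailFamily]

lemma tvdAt_zero_cons (ms ms' : ℕ → List Ω → Ω → ℝ) (c : Ω) (y : List Ω) :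
    tvdAt ms ms' 0 (c :: y) = tvd (ms 0 []) (ms' 0 []) := by
  simp [tvdAt]

end Families

section Stopped
variable {Ω : Type*} [DecidableEq Ω] (eos : Ω) (H : ℕ) (c : Ω)

lemma stopped_singleton : Stopped eos (H + 1) [c] ↔ c = eos ∨ H = 0 := by
  simp [Stopped, eq_comm]

lemma stopped_cons {y : List Ω} (hy : y ≠ []) :
    Stopped eos (H + 1) (c :: y) ↔ c ≠ eos ∧ Stopped eos H y := by
  simp only [Stopped, List.dropLast_cons_of_ne_nil hy, List.getLast?_cons,
    List.getLast?_eq_some_getLast hy]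
  simp [hy, eq_comm]
  tauto

end Stopped

section SeqExp
variable {Ω : Type*} [Fintype Ω] [DecidableEq Ω] (eos : Ω)

section
variable (ms : ℕ → List Ω → Ω → ℝ) (H : ℕ)

lemma seqProb_singleton (c : Ω) :
    seqProb eos ms (H + 1) [c] = if c = eos ∨ H = 0 then ms 0 [] c else 0 := by
  by_cases h : c = eos ∨ H = 0
  · simp [seqProb, (stopped_singleton eos H c).2 h, h]
  · simp [seqProb, mt (stopped_singleton eos H c).1 h, h]

lemma seqProb_cons (c : Ω) {y : List Ω} (hy : y ≠ []) :
    seqProb eos ms (H + 1) (c :: y)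
      = if c = eos then 0 else ms 0 [] c * seqProb eos (tailFamily ms c) H y := by
  by_cases hc : c = eos
  · simp [seqProb, hc, stopped_cons eos H eos hy]
  by_cases hs : Stopped eos H y
  · simp [seqProb, stopped_cons eos H c hy, hs, hc, prod_range_succ', tailFamily, mul_comm]
  · simp [seqProb, stopped_cons eos H c hy, hs, hc]

lemma seqExp_succ (f : List Ω → ℝ) :
    seqExp eos ms (H + 1) f = ∑ c, ms 0 [] c *
      (if c = eos ∨ H = 0 then f [c] else seqExp eos (tailFamily ms c) H fun y => f (c :: y)) := by
  rw [seqExp, sum_ofFn_Icc_succ (F := fun y => seqProb eos ms (H + 1) y * f y)]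
  refine sum_congr rfl fun c _ => ?_
  have h_cons : ∀ n ∈ Icc 1 H, ∀ w : Fin n → Ω,
      seqProb eos ms (H + 1) (c :: List.ofFn w) * f (c :: List.ofFn w)
        = if c = eos then 0
          else ms 0 [] c * (seqProb eos (tailFamily ms c) H (List.ofFn w) * f (c :: List.ofFn w)) := by
    intro n hn w
    rw [seqProb_cons eos ms H c (by simp at hn ⊢; omega)]
    split_ifs <;> ring
  rw [sum_congr rfl fun n hn => sum_congr rfl fun w _ => h_cons n hn w, seqProb_singleton]
  by_cases hc : c = eos
  · simp [hc]
  by_cases hH : H = 0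
  · simp [hH]
  · simp [hc, hH, seqExp, mul_sum]

end

lemma seqExp_const {ms : ℕ → List Ω → Ω → ℝ} (hms : IsModel ms) {H : ℕ} (hH : H ≠ 0) (a : ℝ) :
    seqExp eos ms H (fun _ => a) = a := by
  induction H generalizing ms with
  | zero => contradiction
  | succ H ih =>
    have h_cont : ∀ c, (if c = eos ∨ H = 0 then a else seqExp eos (tailFamily ms c) H fun _ => a)
        = a := fun c => by
      split_ifs with h
      · rfl
      · exact ih (hms.tailFamily c) (by tauto)
    simp only [seqExp_succ, h_cont, ← sum_mul, (hms 0 []).2, one_mul]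

lemma abs_seqExp_le {ms : ℕ → List Ω → Ω → ℝ} (hms : IsModel ms) {f : List Ω → ℝ} {C : ℝ}
    (hf : ∀ y, |f y| ≤ C) (H : ℕ) : |seqExp eos ms H f| ≤ C := by
  induction H generalizing ms f with
  | zero => simpa [seqExp] using (abs_nonneg _).trans (hf [])
  | succ H ih =>
    rw [seqExp_succ]
    calc |∑ c, ms 0 [] c * _| ≤ ∑ c, ms 0 [] c * C := by
          refine (abs_sum_le_sum_abs _ _).trans (sum_le_sum fun c _ => ?_)
          rw [abs_mul, abs_of_nonneg ((hms 0 []).1 c)]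
          gcongr
          · exact (hms 0 []).1 c
          split_ifs
          · exact hf _
          · exact ih (hms.tailFamily c) fun y => hf _
      _ = C := by rw [← sum_mul, (hms 0 []).2, one_mul]

/-- Induction on `k`, conditioning on the first token. For `k = 0` the two processes continue
alike after the first token, so the difference is `Σ_c (ms 0 [] c - ms' 0 [] c) * V c` with
`|V c| ≤ 1/2`. -/
lemma seqExp_sub_le_seqExp_tvdAt {ms ms' r : ℕ → List Ω → Ω → ℝ} (hms : IsModel ms)
    (hr : IsModel r) {k H H' : ℕ} (hkH : k < H) (hHH' : H ≤ H') (h_ne : ∀ j ≠ k, ms j = ms' j)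
    (h_lt : ∀ j < k, r j = ms j) {g : List Ω → ℝ} (hg : ∀ y, |g y| ≤ 1 / 2) :
    seqExp eos ms H g - seqExp eos ms' H g ≤ seqExp eos r H' (tvdAt ms ms' k) := by
  induction k generalizing ms ms' r H H' g with
  | zero =>
    obtain ⟨H, rfl⟩ : ∃ H₀, H = H₀ + 1 := ⟨H - 1, by omega⟩
    obtain ⟨H', rfl⟩ : ∃ H₀, H' = H₀ + 1 := ⟨H' - 1, by omega⟩
    have h_tail : ∀ c, tailFamily ms' c = tailFamily ms c := fun c => by
      ext j pre; rw [tailFamily, tailFamily, h_ne (j + 1) (by omega)]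
    have h_rhs : seqExp eos r (H' + 1) (tvdAt ms ms' 0) = tvd (ms 0 []) (ms' 0 []) := by
      have h_cont : ∀ c, (if c = eos ∨ H' = 0 then tvdAt ms ms' 0 [c]
          else seqExp eos (tailFamily r c) H' fun y => tvdAt ms ms' 0 (c :: y))
            = tvd (ms 0 []) (ms' 0 []) := fun c => by
        simp only [tvdAt_zero_cons]
        split_ifs with h
        · rfl
        · exact seqExp_const eos (hr.tailFamily c) (by tauto) _
      simp only [seqExp_succ, h_cont, ← sum_mul, (hr 0 []).2, one_mul]
    rw [seqExp_succ, seqExp_succ, h_rhs, ← sum_sub_distrib]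
    simp only [h_tail, ← sub_mul]
    refine sum_sub_mul_le_tvd fun c => ?_
    split_ifs
    · exact hg _
    · exact abs_seqExp_le eos (hms.tailFamily c) (fun y => hg _) H
  | succ k ih =>
    obtain ⟨H₀, rfl⟩ : ∃ H₀, H = H₀ + 1 := ⟨H - 1, by omega⟩
    obtain ⟨H₀', rfl⟩ : ∃ H₀, H' = H₀ + 1 := ⟨H' - 1, by omega⟩
    rw [seqExp_succ, seqExp_succ, seqExp_succ, (h_ne 0 (by omega)).symm, h_lt 0 (by omega),
      ← sum_sub_distrib]
    refine sum_le_sum fun c _ => ?_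
    rw [← mul_sub]
    gcongr
    · exact (hms 0 []).1 c
    have hH₀ : H₀ ≠ 0 := by omega
    have hH₀' : H₀' ≠ 0 := by omega
    simp only [hH₀, hH₀', or_false]
    split_ifs
    · simp [tvdAt]
    · rw [tvdAt_succ_cons]
      refine ih (hms.tailFamily c) (hr.tailFamily c) (by omega) (by omega) (fun j hj => ?_)
        (fun j hj => ?_) (fun y => hg _)
      · funext pre; exact congrFun (h_ne (j + 1) (by omega)) (c :: pre)
      · funext pre; exact congrFun (h_lt (j + 1) (by omega)) (c :: pre)

end SeqExp

section Hybrid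
variable {Ω ι : Type*} [Fintype Ω] (p q : ι → List Ω → Ω → ℝ) (x : ι)

def hybrid (k : ℕ) : ℕ → List Ω → Ω → ℝ :=
  fun j pre => if j < k then q x pre else p x pre

lemma IsModel.hybrid {p q : ι → List Ω → Ω → ℝ} (hp : IsModel p) (hq : IsModel q) (x : ι)
    (k : ℕ) : IsModel (hybrid p q x k) :=
  fun j pre => by unfold _root_.hybrid; split_ifs; exacts [hq x pre, hp x pre]

lemma mixExp_replicate [DecidableEq Ω] (eos : Ω) (t : ℕ) (b : Bool) (f : List Ω → ℝ) :
    mixExp eos p q x (List.replicate t b) f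
      = seqExp eos (hybrid p q x (if b then 0 else t)) t f := by
  rw [mixExp, List.length_replicate]
  congr 1
  funext j pre
  by_cases hj : j < t <;> cases b <;> simp [hybrid, hj, List.getD_eq_getElem?_getD]

lemma stepLoss_succ (k : ℕ) :
    stepLoss p q x (k + 1) = tvdAt (hybrid p q x k) (hybrid p q x (k + 1)) k := by
  ext y; simp [stepLoss, tvdAt, hybrid]

variable {p q} in
lemma seqExp_hybrid_sub_le_Eterm [DecidableEq Ω] (eos : Ω) (hp : IsModel p) (hq : IsModel q)
    {k t T : ℕ} (hkt : k < t) (htT : t ≤ T) {g : List Ω → ℝ} (hg : ∀ y, |g y| ≤ 1 / 2) :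
    seqExp eos (hybrid p q x k) t g - seqExp eos (hybrid p q x (k + 1)) t g
      ≤ Eterm eos p q x T (k + 1) := by
  rw [Eterm, modelExp, stepLoss_succ]
  refine seqExp_sub_le_seqExp_tvdAt eos (hp.hybrid hq x k) (fun j pre => hq x pre) hkt htT
    (fun j hj => ?_) (fun j hj => ?_) hg
  · have : j < k ↔ j < k + 1 := by omega
    funext pre; simp only [hybrid, this]
  · funext pre; simp only [hybrid, hj, if_true]

end Hybrid

theorem mixExp_P_le_Q_add_sum_general
    {Ω ι : Type*} [Fintype Ω] [DecidableEq Ω] (eos : Ω)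
    (T : ℕ)
    (p q : ι → List Ω → Ω → ℝ) (hp : IsModel p) (hq : IsModel q)
    (x : ι) (t : ℕ) (ht2 : t ≤ T)
    (δ : List Ω → ℝ)
    (hδ1 : ∀ y, δ y ∈ Set.Icc (-(1 / 2) : ℝ) (1 / 2)) :
    mixExp eos p q x (List.replicate t true) δ ≤
      mixExp eos p q x (List.replicate t false) δ
        + ∑ k ∈ Finset.Icc 1 t, Eterm eos p q x T k := by
  set E : ℕ → ℝ := fun k => seqExp eos (hybrid p q x k) t δ
  calc mixExp eos p q x (List.replicate t true) δ
      = E t + ∑ k ∈ range t, (E k - E (k + 1)) := by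
        rw [sum_range_sub', mixExp_replicate, if_pos rfl]; ring
    _ ≤ E t + ∑ k ∈ range t, Eterm eos p q x T (k + 1) := by
        gcongr with k hk
        exact seqExp_hybrid_sub_le_Eterm x eos hp hq (mem_range.1 hk) ht2
          fun y => abs_le.2 (hδ1 y)
    _ = _ := by rw [mixExp_replicate, if_neg Bool.false_ne_true, sum_Icc_one_eq_sum_range]

/-- **DistillSpec, telescoping upper bound.** For `1 ≤ t ≤ T` and any
`δ : Ω^t → [−1/2,1/2]` (extended by `0` to sequences of length `≠ t`),
`E_{y∼M(x,∅,Pᵗ)}[δ(y)] ≤ E_{y∼M(x,∅,Qᵗ)}[δ(y)] + Σ_{k=1}^{t} E_k(x)`. -/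
theorem mixExp_P_le_Q_add_sum
    {Ω ι : Type*} [Fintype Ω] [DecidableEq Ω] (eos : Ω)
    (T : ℕ) (hT : 1 ≤ T)
    (p q : ι → List Ω → Ω → ℝ) (hp : IsModel p) (hq : IsModel q)
    (x : ι) (t : ℕ) (ht1 : 1 ≤ t) (ht2 : t ≤ T)
    (δ : List Ω → ℝ)
    (hδ1 : ∀ y, δ y ∈ Set.Icc (-(1 / 2) : ℝ) (1 / 2))
    (hδ2 : ∀ y : List Ω, y.length ≠ t → δ y = 0) :
    mixExp eos p q x (List.replicate t true) δ ≤
      mixExp eos p q x (List.replicate t false) δ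
        + ∑ k ∈ Finset.Icc 1 t, Eterm eos p q x T k :=
  mixExp_P_le_Q_add_sum_general eos T p q hp hq x t ht2 δ hδ1
end
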